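/- The group of graded ring automorphisms of S_n is isomorphic to the semidirect product (ℤ/2)ⁿ ⋊ 𝔖_n, where the symmetric group 𝔖_n acts on (ℤ/2)ⁿ by permuting the coordinates. -/

import Mathlib

/-!
Context: for n ≥ 1, S_n := ℤ[x_1,…,x_n]/(x_1², x_j² − x_1 x_j : j = 2,…,n).
The degree-2 part H² of S_n is the free abelian group with basis x_1,…,x_n.
A graded ring automorphism of S_n is a ring automorphism mapping H² onto H²;
these form a group under composition.

STATEMENT 13: The group of graded ring automorphisms of S_n is isomorphic to
the semidirect product (ℤ/2)ⁿ ⋊ 𝔖_n, where the symmetric group 𝔖_n acts on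
(ℤ/2)ⁿ by permuting the coordinates.
-/

open MvPolynomial

noncomputable section

/-- The defining relations x_1², x_j² − x_1 x_j (j ≥ 2) of S_n. -/
def srel (n : ℕ) (j : Fin n) : MvPolynomial (Fin n) ℤ :=
  X j ^ 2 -
    (if j.val = 0 then 0
      else X (⟨0, Nat.lt_of_le_of_lt (Nat.zero_le _) j.isLt⟩ : Fin n)) * X j

/-- S_n = ℤ[x_1,…,x_n]/(x_1², x_j² − x_1 x_j : j = 2,…,n). -/
abbrev SRing (n : ℕ) : Type :=
  MvPolynomial (Fin n) ℤ ⧸ Ideal.span (Set.range (srel n))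

/-- The image x_i of X i in S_n. -/
def sx (n : ℕ) (i : Fin n) : SRing n :=
  Ideal.Quotient.mk _ (X i)

/-- The group of graded ring automorphisms of S_n, i.e. ring automorphisms
mapping H² = spanℤ(x_1,…,x_n) onto itself. -/
def gradedAut (n : ℕ) : Subgroup (RingAut (SRing n)) where
  carrier := {φ | φ '' (Submodule.span ℤ (Set.range (sx n)) : Set (SRing n))
      = (Submodule.span ℤ (Set.range (sx n)) : Set (SRing n))}
  mul_mem' := by
    intro a b ha hb
    simp only [Set.mem_setOf_eq] at *
    have h : ⇑(a * b) = ⇑a ∘ ⇑b := rfl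
    rw [h, Set.image_comp, hb, ha]
  one_mem' := by
    simp only [Set.mem_setOf_eq]
    have h : ⇑(1 : RingAut (SRing n)) = id := rfl
    rw [h, Set.image_id]
  inv_mem' := by
    intro a ha
    simp only [Set.mem_setOf_eq] at *
    conv_lhs => rw [← ha, ← Set.image_comp]
    have h : ⇑a⁻¹ ∘ ⇑a = id := by
      funext z
      exact a.symm_apply_apply z
    rw [h, Set.image_id]

/-- The permutation action of 𝔖_m on the m-fold power of a group `M`,
permuting the coordinates, as a homomorphism to the automorphism group. -/
def permAut (m : ℕ) (M : Type*) [Group M] :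
    Equiv.Perm (Fin m) →* MulAut (Fin m → M) where
  toFun σ :=
    { toFun := fun f => f ∘ σ.symm
      invFun := fun f => f ∘ σ
      left_inv := fun f => by funext i; simp
      right_inv := fun f => by funext i; simp
      map_mul' := fun f g => rfl }
  map_one' := by ext f i; rfl
  map_mul' := fun σ τ => by ext f i; rfl

/-!
Indices run over `Fin n`, so `x_0` is the paper's `x_1`.
Put `z_0 = x_0` and `z_k = x_0 - 2 x_k` for `k ≠ 0`. Then `z_k² = 0`, and `2 H² ⊆ span z_k`.
Test homomorphisms into `ℤ[ε₁, ε₂]/(ε₁², ε₂²)` show that the `z`-coordinates of a square-zero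
element of `H²` have at most one nonzero entry, so the square-zero elements of `H²` are exactly the
multiples of the `z_k`. A graded automorphism therefore permutes the `z_k` up to sign, and since
`H²` is torsion-free it is determined by this signed permutation. Conversely every signed
permutation `z_k ↦ s_k z_{σ k}` is realised by `x_i ↦ (s_0 z_{σ 0} - s_i z_{σ i}) / 2`, which is
integral because every `z_k ≡ x_0` modulo `2`.
-/

/-- For `p = s (x - 2 wa)` and `q = t (x - 2 wb)` the base is `(p - q) / 2`. -/
theorem sq_half_sub {R : Type*} [CommRing R] {x wa wb s t c : R} (hx : x ^ 2 = 0)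
    (ha : wa ^ 2 = x * wa) (hb : wb ^ 2 = x * wb) (hc : 2 * c = s - t) :
    (c * x - s * wa + t * wb) ^ 2 = s * (x - 2 * wa) * (c * x - s * wa + t * wb) := by
  linear_combination (c ^ 2 - s * c) * hx - s ^ 2 * ha + t ^ 2 * hb + t * x * wb * hc

def signEquiv : Multiplicative (ZMod 2) ≃* ℤˣ :=
  MulEquiv.ofBijective
    ({ toFun := fun e => (-1) ^ e.toAdd
       map_one' := rfl
       map_mul' := fun _ _ => uzpow_add _ _ _ } : Multiplicative (ZMod 2) →* ℤˣ)
    (by decide)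

theorem two_mul_intCast_half_sub {R : Type*} [Ring R] (s t : ℤˣ) :
    2 * (((s - t : ℤ) / 2 : ℤ) : R) = (s : ℤ) - (t : ℤ) := by
  rcases Int.units_eq_one_or s with rfl | rfl <;> rcases Int.units_eq_one_or t with rfl | rfl <;>
    norm_num

abbrev Hyperoctahedral (n : ℕ) : Type :=
  SemidirectProduct (Fin n → Multiplicative (ZMod 2)) (Equiv.Perm (Fin n))
    (permAut n (Multiplicative (ZMod 2)))

namespace Hyperoctahedral

variable {n : ℕ}

/-- The sign with which `g` sends `z_k` to `± z_{g.right k}`. -/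
def sign (g : Hyperoctahedral n) (k : Fin n) : ℤˣ := signEquiv (g.left (g.right k))

theorem sign_mul (g h : Hyperoctahedral n) (k : Fin n) :
    sign (g * h) k = sign g (h.right k) * sign h k := by
  simp [sign, permAut, ← map_mul]

theorem sign_one (k : Fin n) : sign (1 : Hyperoctahedral n) k = 1 := by
  simp [sign]

end Hyperoctahedral

namespace SRing

open DualNumber TrivSqZeroExt Hyperoctahedral

variable {n : ℕ}

abbrev H2 (n : ℕ) : Submodule ℤ (SRing n) := Submodule.span ℤ (Set.range (sx n))

theorem sx_mem_H2 (i : Fin n) : sx n i ∈ H2 n := Submodule.subset_span ⟨i, rfl⟩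

theorem mk_srel (j : Fin n) : Ideal.Quotient.mk (Ideal.span (Set.range (srel n))) (srel n j) = 0 :=
  Ideal.Quotient.eq_zero_iff_mem.2 (Ideal.subset_span ⟨j, rfl⟩)

theorem hom_ext {R : Type*} [CommRing R] {f g : SRing n →+* R}
    (h : ∀ i, f (sx n i) = g (sx n i)) : f = g :=
  Ideal.Quotient.ringHom_ext (MvPolynomial.ringHom_ext' (Subsingleton.elim _ _) h)

theorem eqOn_H2 {M : Type*} [AddCommGroup M] {f g : SRing n →+ M}
    (h : ∀ i, f (sx n i) = g (sx n i)) : Set.EqOn f g (H2 n) := fun _ hy =>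
  LinearMap.eqOn_span (f := f.toIntLinearMap) (g := g.toIntLinearMap)
    (by rintro _ ⟨i, rfl⟩; exact h i) hy

theorem map_mem_H2 {f : SRing n →+* SRing n} (hf : ∀ i, f (sx n i) ∈ H2 n) {y : SRing n}
    (hy : y ∈ H2 n) : f y ∈ H2 n :=
  (Submodule.map_span_le f.toAddMonoidHom.toIntLinearMap _ _).2
    (by rintro _ ⟨i, rfl⟩; exact hf i) (Submodule.mem_map_of_mem hy)

theorem mem_gradedAut_iff {φ : RingAut (SRing n)} :
    φ ∈ gradedAut n ↔ (∀ i, φ (sx n i) ∈ H2 n) ∧ ∀ i, φ.symm (sx n i) ∈ H2 n := by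
  change φ '' (H2 n : Set (SRing n)) = H2 n ↔ _
  constructor
  · intro h
    refine ⟨fun i => h.subset ⟨_, sx_mem_H2 i, rfl⟩, fun i => ?_⟩
    obtain ⟨y, hy, hφy⟩ := h.superset (sx_mem_H2 i)
    rwa [← hφy, RingEquiv.symm_apply_apply]
  · rintro ⟨h, h'⟩
    refine (Set.image_subset_iff.2 fun y hy => map_mem_H2 (f := φ.toRingHom) h hy).antisymm
      fun y hy => ⟨φ.symm y, map_mem_H2 (f := φ.symm.toRingHom) h' hy, φ.apply_symm_apply y⟩

variable [NeZero n]

theorem srel_zero : srel n 0 = X 0 ^ 2 := by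
  simp [srel]

theorem srel_of_ne_zero {j : Fin n} (hj : j ≠ 0) : srel n j = X j ^ 2 - X 0 * X j := by
  have hj' : (j : ℕ) ≠ 0 := Fin.val_ne_iff.2 hj
  simp only [srel, if_neg hj']
  rfl

variable (n) in
theorem sx_zero_sq : sx n 0 ^ 2 = 0 := by
  have h := mk_srel (n := n) 0
  rwa [srel_zero, map_pow] at h

theorem sx_sq_of_ne_zero {j : Fin n} (hj : j ≠ 0) : sx n j ^ 2 = sx n 0 * sx n j := by
  have h := mk_srel (n := n) j
  rwa [srel_of_ne_zero hj, map_sub, sub_eq_zero, map_pow, map_mul] at h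

section lift

variable {R : Type*} [CommRing R]

def lift (v : Fin n → R) (h0 : v 0 ^ 2 = 0) (h : ∀ j ≠ 0, v j ^ 2 = v 0 * v j) :
    SRing n →+* R :=
  Ideal.Quotient.lift _ (eval₂Hom (Int.castRingHom R) v) fun p hp => by
    refine Submodule.span_induction ?_ (map_zero _)
      (fun _ _ _ _ ha hb => by rw [map_add, ha, hb, add_zero])
      (fun _ _ _ hb => by rw [smul_eq_mul, map_mul, hb, mul_zero]) hp
    rintro _ ⟨j, rfl⟩
    rcases eq_or_ne j 0 with rfl | hj
    · simpa [srel_zero] using h0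
    · simp [srel_of_ne_zero hj, h j hj]

@[simp]
theorem lift_sx (v : Fin n → R) (h0 h) (i : Fin n) : lift v h0 h (sx n i) = v i := by
  simp [lift, sx]

end lift

def coord (k : Fin n) : SRing n →+ ℤ :=
  (sndHom ℤ ℤ).toAddMonoidHom.comp
    (lift (Pi.single k ε) (by simp [sq, Pi.single_apply])
      (fun j _ => by simp [sq, Pi.single_apply])).toAddMonoidHom

theorem coord_sx (k i : Fin n) : coord k (sx n i) = if i = k then 1 else 0 := by
  by_cases h : i = k <;> simp [coord, h]

theorem coord_sum_smul_sx (k : Fin n) (c : Fin n → ℤ) : coord k (∑ i, c i • sx n i) = c k := by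
  simp only [map_sum, map_zsmul, coord_sx, smul_eq_mul, mul_ite, mul_one, mul_zero,
    Finset.sum_ite_eq', Finset.mem_univ, if_true]

theorem eq_zero_of_smul_eq_zero {m : ℤ} (hm : m ≠ 0) {y : SRing n} (hy : y ∈ H2 n)
    (h : m • y = 0) : y = 0 := by
  obtain ⟨c, rfl⟩ := (Submodule.mem_span_range_iff_exists_fun ℤ).1 hy
  have hc : ∀ k, c k = 0 := fun k => by
    have h' := congrArg (coord k) h
    rw [Finset.smul_sum, map_zero] at h'
    simp only [smul_smul] at h'
    rw [coord_sum_smul_sx] at h'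
    exact (mul_eq_zero.1 h').resolve_left hm
  simp [hc]

def sw (k : Fin n) : SRing n := if k = 0 then 0 else sx n k

def sz (k : Fin n) : SRing n := sx n 0 - 2 * sw k

theorem sw_zero : sw (0 : Fin n) = 0 := if_pos rfl

theorem sw_of_ne_zero {k : Fin n} (hk : k ≠ 0) : sw k = sx n k := if_neg hk

theorem sw_sq (k : Fin n) : sw k ^ 2 = sx n 0 * sw k := by
  rcases eq_or_ne k 0 with rfl | hk
  · simp [sw_zero]
  · rw [sw_of_ne_zero hk, sx_sq_of_ne_zero hk]

theorem sz_zero : sz (0 : Fin n) = sx n 0 := by simp [sz, sw_zero]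

theorem sz_sq (k : Fin n) : sz k ^ 2 = 0 := by
  rw [sz]
  linear_combination sx_zero_sq n + 4 * sw_sq k

theorem sw_mem_H2 (k : Fin n) : sw k ∈ H2 n := by
  unfold sw
  split_ifs
  exacts [zero_mem _, sx_mem_H2 k]

theorem sz_mem_H2 (k : Fin n) : sz k ∈ H2 n := by
  rw [sz, two_mul]
  exact sub_mem (sx_mem_H2 0) (add_mem (sw_mem_H2 k) (sw_mem_H2 k))

theorem two_mul_sx {i : Fin n} (hi : i ≠ 0) : 2 * sx n i = sx n 0 - sz i := by
  rw [sz, sw_of_ne_zero hi]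
  ring

theorem coord_zero_sz (k : Fin n) : coord 0 (sz k) = 1 := by
  rcases eq_or_ne k 0 with rfl | hk
  · simp [sz_zero, coord_sx]
  · simp [sz, sw_of_ne_zero hk, two_mul, coord_sx, hk]

section zlift

variable {R : Type*} [CommRing R]

/-- Over `ℤ[1/2]`, `S_n` is generated by the square-zero `z_k`; `zlift u` is the map `z_k ↦ 2 u k`,
which is defined over `ℤ`. -/
def zlift (u : Fin n → R) (hu : ∀ k, u k ^ 2 = 0) : SRing n →+* R :=
  lift (fun i => if i = 0 then 2 * u 0 else u 0 - u i)
    (by simp only [↓reduceIte]; linear_combination 4 * hu 0)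
    (fun j hj => by simp only [↓reduceIte, hj]; linear_combination hu j - hu 0)

theorem zlift_sx_zero (u : Fin n → R) (hu) : zlift u hu (sx n 0) = 2 * u 0 := by
  simp [zlift]

theorem zlift_sx_of_ne_zero (u : Fin n → R) (hu) {i : Fin n} (hi : i ≠ 0) :
    zlift u hu (sx n i) = u 0 - u i := by
  simp [zlift, hi]

theorem zlift_sz (u : Fin n → R) (hu) (k : Fin n) : zlift u hu (sz k) = 2 * u k := by
  rcases eq_or_ne k 0 with rfl | hk
  · rw [sz_zero, zlift_sx_zero]
  · rw [sz, sw_of_ne_zero hk, map_sub, map_mul, map_ofNat, zlift_sx_zero,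
      zlift_sx_of_ne_zero u hu hk]
    ring

end zlift

/-- The coordinates in `2 y = ∑ k, zc k y • z_k`. -/
def zc (k : Fin n) : SRing n →+ ℤ :=
  (sndHom ℤ ℤ).toAddMonoidHom.comp
    (zlift (Pi.single k ε) (fun j => by simp [sq, Pi.single_apply])).toAddMonoidHom

theorem zc_sz (k j : Fin n) : zc k (sz j) = if j = k then 2 else 0 := by
  by_cases h : j = k <;> simp [zc, zlift_sz, h]
  rfl

theorem zc_sx_of_ne_zero (k : Fin n) {i : Fin n} (hi : i ≠ 0) :
    zc k (sx n i) = (if 0 = k then 1 else 0) - if i = k then 1 else 0 := by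
  simp only [zc, AddMonoidHom.comp_apply, RingHom.toAddMonoidHom_eq_coe, AddMonoidHom.coe_coe,
    zlift_sx_of_ne_zero _ _ hi, LinearMap.toAddMonoidHom_coe, sndHom_apply, snd_sub,
    Pi.single_apply, apply_ite snd, snd_eps, snd_zero]

theorem zlift_eq_sum {R : Type*} [CommRing R] (u : Fin n → R) (hu) {y : SRing n}
    (hy : y ∈ H2 n) : zlift u hu y = ∑ k, zc k y • u k := by
  have h := eqOn_H2 (f := (zlift u hu).toAddMonoidHom)
    (g := ∑ k, (zmultiplesHom R (u k)).comp (zc k)) (fun i => ?_) hy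
  · simpa using h
  rcases eq_or_ne i 0 with rfl | hi
  · simp [← sz_zero, zc_sz, zlift_sz]
  · simp [zc_sx_of_ne_zero _ hi, zlift_sx_of_ne_zero _ _ hi, sub_smul, ite_smul,
      Finset.sum_sub_distrib]

theorem two_mul_eq_sum {y : SRing n} (hy : y ∈ H2 n) : 2 * y = ∑ k, zc k y • sz k := by
  rw [← zlift_eq_sum sz sz_sq hy]
  refine eqOn_H2 (f := AddMonoidHom.mulLeft 2) (g := (zlift sz sz_sq).toAddMonoidHom)
    (fun i => ?_) hy
  rcases eq_or_ne i 0 with rfl | hi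
  · simp [zlift_sx_zero, sz_zero]
  · simp [zlift_sx_of_ne_zero _ _ hi, sz_zero, two_mul_sx hi]

/-- `inl ε` and `ε` are the generators `ε₁`, `ε₂` of `ℤ[ε₁, ε₂]/(ε₁², ε₂²)`. -/
theorem mul_eq_zero_of_sq_eq_zero {a b : ℤ}
    (h : (a • inl ε + b • ε : DualNumber (DualNumber ℤ)) ^ 2 = 0) : a * b = 0 := by
  have := congrArg (fun z : DualNumber (DualNumber ℤ) => snd (snd z)) h
  simp [sq] at this
  linarith [mul_comm a b]

theorem zc_mul_zc_eq_zero {y : SRing n} (hy : y ∈ H2 n) (hsq : y ^ 2 = 0) {a b : Fin n}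
    (hab : a ≠ b) : zc a y * zc b y = 0 := by
  let u : Fin n → DualNumber (DualNumber ℤ) := Pi.single a (inl ε) + Pi.single b ε
  have hu : ∀ k, u k ^ 2 = 0 := fun k => by
    rcases eq_or_ne k a with rfl | hka
    · simp [u, hab, sq, ← inl_mul]
    · rcases eq_or_ne k b with rfl | hkb
      · simp [u, hka, sq]
      · simp [u, hka, hkb]
  apply mul_eq_zero_of_sq_eq_zero
  have := congrArg (zlift u hu) hsq
  rw [map_pow, zlift_eq_sum u hu hy, map_zero] at this
  convert this using 2
  simp [u, smul_add, Finset.sum_add_distrib, Pi.single_apply]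

theorem exists_eq_smul_sz_of_sq_eq_zero {y : SRing n} (hy : y ∈ H2 n) (hsq : y ^ 2 = 0) :
    ∃ (d : ℤ) (m : Fin n), y = d • sz m := by
  obtain ⟨m, hm⟩ : ∃ m, ∀ k ≠ m, zc k y = 0 := by
    by_cases h : ∃ m, zc m y ≠ 0
    · obtain ⟨m, hm⟩ := h
      exact ⟨m, fun k hk => (mul_eq_zero.1 (zc_mul_zc_eq_zero hy hsq hk)).resolve_right hm⟩
    · push Not at h
      exact ⟨0, fun k _ => h k⟩
  have h2y : 2 * y = zc m y • sz m := by
    rw [two_mul_eq_sum hy, Finset.sum_eq_single m (fun k _ hk => by rw [hm k hk, zero_smul])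
      (by simp)]
  have hm_even : zc m y = 2 * coord 0 y := by
    have h := congrArg (coord 0) h2y
    rw [map_zsmul, coord_zero_sz, smul_eq_mul, mul_one, two_mul, map_add] at h
    rw [← h, two_mul]
  refine ⟨coord 0 y, m, eq_of_sub_eq_zero (eq_zero_of_smul_eq_zero two_ne_zero
    (sub_mem hy (Submodule.smul_mem _ _ (sz_mem_H2 m))) ?_)⟩
  rw [smul_sub, smul_smul, ← hm_even, ← h2y, two_smul, two_mul, sub_self]

theorem smul_sz_eq_sz {d : ℤ} {a b : Fin n} (h : d • sz a = sz b) : d = 1 ∧ a = b := by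
  have h' := congrArg (zc b) h
  rw [map_zsmul, zc_sz, zc_sz, if_pos rfl] at h'
  by_cases hab : a = b
  · rw [if_pos hab] at h'
    exact ⟨by simpa using h', hab⟩
  · simp [hab] at h'

/-- `(s z_a - t z_b) / 2`, which lies in `H²` because `z_a ≡ z_b ≡ x_0 mod 2`. -/
def halfSub (s : ℤˣ) (a : Fin n) (t : ℤˣ) (b : Fin n) : SRing n :=
  (((s - t : ℤ) / 2 : ℤ) : SRing n) * sx n 0 - (s : ℤ) * sw a + (t : ℤ) * sw b

theorem two_mul_halfSub (s : ℤˣ) (a : Fin n) (t : ℤˣ) (b : Fin n) :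
    2 * halfSub s a t b = s • sz a - t • sz b := by
  rw [halfSub, sz, sz, Units.smul_def, Units.smul_def, zsmul_eq_mul, zsmul_eq_mul]
  linear_combination sx n 0 * two_mul_intCast_half_sub (R := SRing n) s t

theorem halfSub_sq (s : ℤˣ) (a : Fin n) (t : ℤˣ) (b : Fin n) :
    halfSub s a t b ^ 2 = (s • sz a) * halfSub s a t b := by
  rw [sz, Units.smul_def, zsmul_eq_mul]
  exact sq_half_sub (sx_zero_sq n) (sw_sq a) (sw_sq b) (two_mul_intCast_half_sub s t)

theorem halfSub_mem_H2 (s : ℤˣ) (a : Fin n) (t : ℤˣ) (b : Fin n) : halfSub s a t b ∈ H2 n := by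
  simp only [halfSub, ← zsmul_eq_mul]
  exact add_mem (sub_mem (Submodule.smul_mem _ _ (sx_mem_H2 0))
    (Submodule.smul_mem _ _ (sw_mem_H2 a))) (Submodule.smul_mem _ _ (sw_mem_H2 b))

/-- Works because `2 x_i = x_0 - z_i` and `H²` is torsion-free. -/
theorem ringHom_ext_sz {f g : SRing n →+* SRing n} (hf : ∀ i, f (sx n i) ∈ H2 n)
    (hg : ∀ i, g (sx n i) ∈ H2 n) (h : ∀ k, f (sz k) = g (sz k)) : f = g := by
  refine hom_ext fun i => ?_
  have h0 : f (sx n 0) = g (sx n 0) := by simpa [sz_zero] using h 0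
  rcases eq_or_ne i 0 with rfl | hi
  · exact h0
  refine eq_of_sub_eq_zero (eq_zero_of_smul_eq_zero two_ne_zero (sub_mem (hf i) (hg i)) ?_)
  rw [smul_sub, two_smul, two_smul, ← map_add, ← map_add, ← two_mul, two_mul_sx hi, map_sub,
    map_sub, h0, h, sub_self]

/-- The endomorphism `z_k ↦ sign g k • z_{g.right k}`: it sends `x_0 = z_0` to `s_0 z_{σ 0}` and
`x_i = (z_0 - z_i) / 2` to `(s_0 z_{σ 0} - s_i z_{σ i}) / 2`. -/
def act (g : Hyperoctahedral n) : SRing n →+* SRing n :=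
  lift (fun i => if i = 0 then sign g 0 • sz (g.right 0)
      else halfSub (sign g 0) (g.right 0) (sign g i) (g.right i))
    (by simp only [↓reduceIte]; rw [Units.smul_def, smul_pow, sz_sq, smul_zero])
    (fun j hj => by simp only [↓reduceIte, hj, halfSub_sq])

theorem act_sx_mem_H2 (g : Hyperoctahedral n) (i : Fin n) : act g (sx n i) ∈ H2 n := by
  rw [act, lift_sx]
  split_ifs
  exacts [Submodule.smul_of_tower_mem _ _ (sz_mem_H2 _), halfSub_mem_H2 _ _ _ _]

theorem act_sz (g : Hyperoctahedral n) (k : Fin n) :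
    act g (sz k) = sign g k • sz (g.right k) := by
  rcases eq_or_ne k 0 with rfl | hk
  · simp [act, sz_zero]
  · rw [sz, sw_of_ne_zero hk, map_sub, map_mul, map_ofNat]
    simp only [act, lift_sx, ↓reduceIte, hk, two_mul_halfSub, sub_sub_cancel]

theorem act_mul (g h : Hyperoctahedral n) : act (g * h) = (act g).comp (act h) := by
  refine ringHom_ext_sz (act_sx_mem_H2 _) (fun i => map_mem_H2 (act_sx_mem_H2 g)
    (act_sx_mem_H2 h i)) fun k => ?_
  simp only [RingHom.comp_apply, act_sz, Units.smul_def, map_zsmul, smul_smul, sign_mul,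
    Units.val_mul, mul_comm]
  rfl

theorem act_one : act (1 : Hyperoctahedral n) = RingHom.id _ :=
  ringHom_ext_sz (act_sx_mem_H2 _) (fun i => sx_mem_H2 i) fun k => by simp [act_sz, sign_one]

def toRingAut : Hyperoctahedral n →* RingAut (SRing n) where
  toFun g := RingEquiv.ofRingHom (act g) (act g⁻¹)
    (by rw [← act_mul, mul_inv_cancel, act_one]) (by rw [← act_mul, inv_mul_cancel, act_one])
  map_one' := RingEquiv.ext fun y => by simp [act_one]
  map_mul' g h := RingEquiv.ext fun y => by simp [act_mul]

theorem toRingAut_mem_gradedAut (g : Hyperoctahedral n) : toRingAut g ∈ gradedAut n :=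
  mem_gradedAut_iff.2 ⟨act_sx_mem_H2 g, act_sx_mem_H2 g⁻¹⟩

theorem mul_eq_one_and_comp_eq_of_sz {f f' : SRing n →+* SRing n} (hff' : ∀ y, f' (f y) = y)
    {d d' : Fin n → ℤ} {τ τ' : Fin n → Fin n} (hd : ∀ k, f (sz k) = d k • sz (τ k))
    (hd' : ∀ k, f' (sz k) = d' k • sz (τ' k)) (k : Fin n) :
    d k * d' (τ k) = 1 ∧ τ' (τ k) = k :=
  smul_sz_eq_sz <| by rw [← smul_smul, ← hd', ← map_zsmul, ← hd, hff']

theorem exists_map_sz_eq_of_mem_gradedAut {φ : RingAut (SRing n)} (hφ : φ ∈ gradedAut n) :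
    ∃ (s : Fin n → ℤˣ) (σ : Equiv.Perm (Fin n)),
      ∀ k, φ (sz k) = s k • sz (σ k) := by
  have hsz (f : SRing n →+* SRing n) (hf : ∀ i, f (sx n i) ∈ H2 n) (k : Fin n) :
      ∃ (d : ℤ) (m : Fin n), f (sz k) = d • sz m :=
    exists_eq_smul_sz_of_sq_eq_zero (map_mem_H2 hf (sz_mem_H2 k))
      (by rw [← map_pow, sz_sq, map_zero])
  obtain ⟨hφ₁, hφ₂⟩ := mem_gradedAut_iff.1 hφ
  choose d τ hd using hsz φ.toRingHom hφ₁
  choose d' τ' hd' using hsz φ.symm.toRingHom hφ₂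
  have h := mul_eq_one_and_comp_eq_of_sz φ.symm_apply_apply hd hd'
  have h' := mul_eq_one_and_comp_eq_of_sz φ.apply_symm_apply hd' hd
  exact ⟨fun k => ⟨d k, d' (τ k), (h k).1, by rw [mul_comm, (h k).1]⟩,
    ⟨τ, τ', fun k => (h k).2, fun k => (h' k).2⟩, fun k => hd k⟩

theorem toRingAut_apply (g : Hyperoctahedral n) (y : SRing n) : toRingAut g y = act g y := rfl

theorem toRingAut_injective : Function.Injective (toRingAut (n := n)) := by
  refine (injective_iff_map_eq_one _).2 fun g hg => ?_
  have h (k : Fin n) : sign g k = 1 ∧ g.right k = k := by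
    have hk := smul_sz_eq_sz (d := sign g k) (a := g.right k) (b := k) <| by
      rw [← Units.smul_def, ← act_sz, ← toRingAut_apply, hg]
      rfl
    exact ⟨Units.ext hk.1, hk.2⟩
  have hright : g.right = 1 := Equiv.ext fun k => (h k).2
  refine SemidirectProduct.ext (funext fun k => signEquiv.injective ?_) hright
  simpa [sign, hright] using (h k).1

theorem exists_toRingAut_eq {φ : RingAut (SRing n)} (hφ : φ ∈ gradedAut n) :
    ∃ g, toRingAut g = φ := by
  obtain ⟨s, σ, hφ_sz⟩ := exists_map_sz_eq_of_mem_gradedAut hφ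
  let g : Hyperoctahedral n := ⟨fun m => signEquiv.symm (s (σ.symm m)), σ⟩
  have hsign (k : Fin n) : sign g k = s k := by simp [g, sign]
  have hact : act g = φ.toRingHom :=
    ringHom_ext_sz (act_sx_mem_H2 g) (mem_gradedAut_iff.1 hφ).1
      fun k => by rw [act_sz, hsign, RingEquiv.toRingHom_eq_coe, RingEquiv.coe_toRingHom, hφ_sz]
  exact ⟨g, RingEquiv.ext fun y => congr($hact y)⟩

end SRing

theorem gradedAut_iso_semidirect (n : ℕ) [NeZero n] :
    Nonempty (gradedAut n ≃*
      SemidirectProduct (Fin n → Multiplicative (ZMod 2)) (Equiv.Perm (Fin n))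
        (permAut n (Multiplicative (ZMod 2)))) := by
  let Ψ := SRing.toRingAut.codRestrict (gradedAut n) SRing.toRingAut_mem_gradedAut
  have hΨ : Function.Bijective Ψ := by
    refine ⟨fun g h hgh => SRing.toRingAut_injective congr(($hgh).val), fun ⟨φ, hφ⟩ => ?_⟩
    obtain ⟨g, hg⟩ := SRing.exists_toRingAut_eq hφ
    exact ⟨g, Subtype.ext hg⟩
  exact ⟨(MulEquiv.ofBijective Ψ hΨ).symm⟩


end
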